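/- arXiv:1005.3675 — 6 statements merged into one kernel-verified Lean document; each statement's English description precedes it below -/
import Mathlib

section
/- Let ρ be a positive semidefinite operator on a finite-dimensional Hilbert space and ψ a unit vector in the range of ρ. Then the maximal Λ ≥ 0 such that ρ − Λ|ψ⟩⟨ψ| ≥ 0 equals 1/⟨ψ|ρ⁻¹|ψ⟩, where ρ⁻¹ denotes the pseudo-inverse of ρ. -/
open Matrix ComplexOrder

/-!
Write `ψ = ρ w`; since `ρ ρ⁺ ρ = ρ`, one may take `w = ρ⁺ ψ`, so that `⟨ψ, ρ⁺ ψ⟩ = ⟨w, ρ w⟩`.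
As `ρ` is Hermitian, `⟨ψ, x⟩ = ⟨w, ρ x⟩`, and the Cauchy–Schwarz inequality for the semi-inner
product `⟨·, ρ ·⟩` gives `|⟨ψ, x⟩|² ≤ ⟨w, ρ w⟩ ⟨x, ρ x⟩`, i.e. `ρ - |ψ⟩⟨ψ| / ⟨w, ρ w⟩ ≥ 0`.
Testing `ρ - λ |ψ⟩⟨ψ| ≥ 0` on `w` gives `λ ⟨w, ρ w⟩² ≤ ⟨w, ρ w⟩`, so no larger `λ` works.
-/

namespace Matrix

variable {m 𝕜 : Type*} [Fintype m] [RCLike 𝕜]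

open RCLike

theorem PosSemidef.norm_dotProduct_mulVec_sq_le {ρ : Matrix m m 𝕜} (hρ : ρ.PosSemidef)
    (w x : m → 𝕜) :
    ‖star w ⬝ᵥ ρ *ᵥ x‖ ^ 2 ≤ re (star w ⬝ᵥ ρ *ᵥ w) * re (star x ⬝ᵥ ρ *ᵥ x) := by
  let := ρ.toSeminormedAddCommGroup hρ
  let := ρ.toInnerProductSpace hρ
  have hinner (y z : m → 𝕜) : inner 𝕜 y z = star y ⬝ᵥ ρ *ᵥ z := dotProduct_comm _ _
  have h := inner_mul_inner_self_le (𝕜 := 𝕜) w x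
  rwa [norm_inner_symm x w, ← sq, hinner, hinner, hinner] at h

theorem IsHermitian.star_dotProduct_eq_of_mulVec_eq {ρ : Matrix m m 𝕜} (hρ : ρ.IsHermitian)
    {w ψ : m → 𝕜} (hw : ρ *ᵥ w = ψ) (x : m → 𝕜) : star ψ ⬝ᵥ x = star w ⬝ᵥ ρ *ᵥ x := by
  rw [← hw, star_mulVec, hρ.eq, dotProduct_mulVec]

theorem IsHermitian.posSemidef_iff_re_dotProduct_mulVec_nonneg {M : Matrix m m 𝕜}
    (hM : M.IsHermitian) : M.PosSemidef ↔ ∀ x, 0 ≤ re (star x ⬝ᵥ M *ᵥ x) := by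
  simp only [posSemidef_iff_dotProduct_mulVec, hM, true_and, nonneg_iff (K := 𝕜),
    hM.im_star_dotProduct_mulVec_self, and_true]

theorem posSemidef_sub_smul_vecMulVec_iff {ρ : Matrix m m 𝕜} (hρ : ρ.IsHermitian) (ψ : m → 𝕜)
    (l : ℝ) : (ρ - l • vecMulVec ψ (star ψ)).PosSemidef ↔
      ∀ x, l * ‖star ψ ⬝ᵥ x‖ ^ 2 ≤ re (star x ⬝ᵥ ρ *ᵥ x) := by
  have hP : (vecMulVec ψ (star ψ)).IsHermitian := (posSemidef_vecMulVec_self_star ψ).1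
  rw [(hρ.sub (hP.smul (IsSelfAdjoint.all l))).posSemidef_iff_re_dotProduct_mulVec_nonneg]
  refine forall_congr' fun x => ?_
  have hψx : star x ⬝ᵥ ψ * (star ψ ⬝ᵥ x) = (‖star ψ ⬝ᵥ x‖ ^ 2 : 𝕜) :=
    star_dotProduct x ψ ▸ conj_mul _
  rw [sub_mulVec, smul_mulVec, vecMulVec_mulVec, op_smul_eq_smul, dotProduct_sub,
    dotProduct_smul, dotProduct_smul, smul_eq_mul, mul_comm, hψx, map_sub, sub_nonneg,
    smul_re, ← ofReal_pow, ofReal_re]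

theorem PosSemidef.re_dotProduct_mulVec_pos {ρ : Matrix m m 𝕜} (hρ : ρ.PosSemidef) {w : m → 𝕜}
    (hw : ρ *ᵥ w ≠ 0) : 0 < re (star w ⬝ᵥ ρ *ᵥ w) := by
  refine (hρ.re_dotProduct_nonneg w).lt_of_ne' fun h => hw ?_
  rw [← hρ.dotProduct_mulVec_zero_iff]
  exact RCLike.ext (by simpa using h) (by simpa using hρ.1.im_star_dotProduct_mulVec_self w)

theorem PosSemidef.norm_dotProduct_mulVec_self {ρ : Matrix m m 𝕜} (hρ : ρ.PosSemidef) (w : m → 𝕜) :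
    ‖star w ⬝ᵥ ρ *ᵥ w‖ = re (star w ⬝ᵥ ρ *ᵥ w) := by
  simpa using congrArg re (norm_of_nonneg' (hρ.dotProduct_mulVec_nonneg w))

theorem PosSemidef.isGreatest_sub_smul_vecMulVec {ρ : Matrix m m 𝕜} (hρ : ρ.PosSemidef)
    {w ψ : m → 𝕜} (hw : ρ *ᵥ w = ψ) (hψ : ψ ≠ 0) :
    IsGreatest {l : ℝ | 0 ≤ l ∧ (ρ - l • vecMulVec ψ (star ψ)).PosSemidef}
      (re (star ψ ⬝ᵥ w))⁻¹ := by
  have hψ_dot := hρ.1.star_dotProduct_eq_of_mulVec_eq hw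
  have hc : 0 < re (star w ⬝ᵥ ρ *ᵥ w) := hρ.re_dotProduct_mulVec_pos (hw ▸ hψ)
  simp only [posSemidef_sub_smul_vecMulVec_iff hρ.1, hψ_dot]
  refine ⟨⟨inv_nonneg.2 hc.le, fun x => ?_⟩, fun l ⟨_, hl⟩ => ?_⟩
  · rw [inv_mul_le_iff₀ hc]
    exact hρ.norm_dotProduct_mulVec_sq_le w x
  · have hlw := hl w
    rw [hρ.norm_dotProduct_mulVec_self, sq, ← mul_assoc] at hlw
    rw [← one_div, le_div_iff₀ hc]
    exact le_of_mul_le_mul_right (by rwa [one_mul]) hc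

end Matrix

theorem stmt_8_general {n : ℕ} (ρ ρinv : Matrix (Fin n) (Fin n) ℂ)
    (hρ : ρ.PosSemidef)
    -- Moore–Penrose pseudo-inverse conditions
    (hmp1 : ρ * ρinv * ρ = ρ)
    (ψ : Fin n → ℂ) (hunit : star ψ ⬝ᵥ ψ = 1)
    (hrange : ∃ v, ρ.mulVec v = ψ)
    (Λ : ℝ) (hΛ : (Λ : ℂ) = (star ψ ⬝ᵥ ρinv.mulVec ψ)⁻¹) :
    IsGreatest {l : ℝ | 0 ≤ l ∧ (ρ - l • Matrix.vecMulVec ψ (star ψ)).PosSemidef} Λ := by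
  obtain ⟨v, hv⟩ := hrange
  have hw : ρ *ᵥ (ρinv *ᵥ ψ) = ψ := by rw [← hv, mulVec_mulVec, mulVec_mulVec, hmp1]
  have hψ : ψ ≠ 0 := by
    rintro rfl
    simp at hunit
  have hreal : ((star ψ ⬝ᵥ ρinv *ᵥ ψ).re : ℂ) = star ψ ⬝ᵥ ρinv *ᵥ ψ := by
    rw [hρ.1.star_dotProduct_eq_of_mulVec_eq hw]
    exact Complex.ext rfl (hρ.1.im_star_dotProduct_mulVec_self _).symm
  convert hρ.isGreatest_sub_smul_vecMulVec hw hψ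
  exact_mod_cast hΛ.trans (congrArg Inv.inv hreal.symm)

theorem stmt_8 {n : ℕ} (ρ ρinv : Matrix (Fin n) (Fin n) ℂ)
    (hρ : ρ.PosSemidef)
    -- Moore–Penrose pseudo-inverse conditions
    (hmp1 : ρ * ρinv * ρ = ρ) (hmp2 : ρinv * ρ * ρinv = ρinv)
    (hmp3 : (ρ * ρinv).IsHermitian) (hmp4 : (ρinv * ρ).IsHermitian)
    (ψ : Fin n → ℂ) (hunit : star ψ ⬝ᵥ ψ = 1)
    (hrange : ∃ v, ρ.mulVec v = ψ)
    (Λ : ℝ) (hΛ : (Λ : ℂ) = (star ψ ⬝ᵥ ρinv.mulVec ψ)⁻¹) :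
    IsGreatest {l : ℝ | 0 ≤ l ∧ (ρ - l • Matrix.vecMulVec ψ (star ψ)).PosSemidef} Λ :=
  stmt_8_general ρ ρinv hρ hmp1 ψ hunit hrange Λ hΛ
end

section
/- Let ρ be positive semidefinite, and ψ₁, ψ₂ unit vectors in the range of ρ with ⟨ψ₁|ρ⁻¹|ψ₂⟩ = 0 (ρ⁻¹ the pseudo-inverse). Then ρ − Λ₁|ψ₁⟩⟨ψ₁| − Λ₂|ψ₂⟩⟨ψ₂| ≥ 0, where Λ_i = 1/⟨ψ_i|ρ⁻¹|ψ_i⟩. -/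
open Matrix ComplexOrder

-- Uniqueness of the Moore–Penrose pseudo-inverse
lemma mp_unique {n : ℕ} (A B C : Matrix (Fin n) (Fin n) ℂ)
    (h1 : A * B * A = A) (h2 : B * A * B = B)
    (h3 : (A * B)ᴴ = A * B) (h4 : (B * A)ᴴ = B * A)
    (g1 : A * C * A = A) (g2 : C * A * C = C)
    (g3 : (A * C)ᴴ = A * C) (g4 : (C * A)ᴴ = C * A) : B = C := by
  have hab : A * B = A * C := by
    calc A * B = (A*C*A) * B := by rw [g1]
    _ = (A*C) * (A*B) := by noncomm_ring
    _ = (A*C)ᴴ * (A*B)ᴴ := by rw [g3, h3]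
    _ = Cᴴ * (A*B*A)ᴴ := by
        simp only [Matrix.conjTranspose_mul, Matrix.mul_assoc]
    _ = Cᴴ * Aᴴ := by rw [h1]
    _ = (A*C)ᴴ := by rw [Matrix.conjTranspose_mul]
    _ = A * C := g3
  have hba : B * A = C * A := by
    calc B * A = B * (A*C*A) := by rw [g1]
    _ = (B*A) * (C*A) := by noncomm_ring
    _ = (B*A)ᴴ * (C*A)ᴴ := by rw [h4, g4]
    _ = (A*B*A)ᴴ * Cᴴ := by
        simp only [Matrix.conjTranspose_mul, Matrix.mul_assoc]
    _ = Aᴴ * Cᴴ := by rw [h1]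
    _ = (C*A)ᴴ := by rw [Matrix.conjTranspose_mul]
    _ = C * A := g4
  calc B = B * A * B := h2.symm
  _ = B * (A * C) := by rw [Matrix.mul_assoc, hab]
  _ = (B * A) * C := by rw [Matrix.mul_assoc]
  _ = C * A * C := by rw [hba]
  _ = C := g2

lemma mul_vecMulVec' {n : ℕ} (A : Matrix (Fin n) (Fin n) ℂ) (u v : Fin n → ℂ) :
    A * vecMulVec u v = vecMulVec (A.mulVec u) v := by
  ext i j
  simp only [Matrix.mul_apply, vecMulVec_apply, Matrix.mulVec, dotProduct,
    Finset.sum_mul]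
  exact Finset.sum_congr rfl fun k _ => by ring

lemma vecMulVec_mul_vecMulVec' {n : ℕ} (u v u' v' : Fin n → ℂ) :
    vecMulVec u v * vecMulVec u' v' = (v ⬝ᵥ u') • vecMulVec u v' := by
  ext i j
  simp only [Matrix.mul_apply, vecMulVec_apply, dotProduct, smul_eq_mul,
    Matrix.smul_apply, Finset.sum_mul]
  exact Finset.sum_congr rfl fun k _ => by ring

lemma vecMulVec_conjT {n : ℕ} (u v : Fin n → ℂ) :
    (vecMulVec u v)ᴴ = vecMulVec (star v) (star u) := by
  ext i j
  simp [vecMulVec_apply, Matrix.conjTranspose_apply, mul_comm]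

theorem stmt_10 {n : ℕ} (ρ ρinv : Matrix (Fin n) (Fin n) ℂ)
    (hρ : ρ.PosSemidef)
    -- Moore–Penrose pseudo-inverse conditions
    (hmp1 : ρ * ρinv * ρ = ρ) (hmp2 : ρinv * ρ * ρinv = ρinv)
    (hmp3 : (ρ * ρinv).IsHermitian) (hmp4 : (ρinv * ρ).IsHermitian)
    (ψ₁ ψ₂ : Fin n → ℂ)
    (hunit₁ : star ψ₁ ⬝ᵥ ψ₁ = 1) (hunit₂ : star ψ₂ ⬝ᵥ ψ₂ = 1)
    (hrange₁ : ∃ v, ρ.mulVec v = ψ₁) (hrange₂ : ∃ v, ρ.mulVec v = ψ₂)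
    (horth : star ψ₁ ⬝ᵥ ρinv.mulVec ψ₂ = 0)
    (Λ₁ Λ₂ : ℝ)
    (hΛ₁ : (Λ₁ : ℂ) = (star ψ₁ ⬝ᵥ ρinv.mulVec ψ₁)⁻¹)
    (hΛ₂ : (Λ₂ : ℂ) = (star ψ₂ ⬝ᵥ ρinv.mulVec ψ₂)⁻¹) :
    (ρ - Λ₁ • Matrix.vecMulVec ψ₁ (star ψ₁)
       - Λ₂ • Matrix.vecMulVec ψ₂ (star ψ₂)).PosSemidef := by
  have hρH : ρᴴ = ρ := hρ.isHermitian
  -- ρinv is Hermitian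
  have hBH : ρinvᴴ = ρinv := by
    have e3 : ρ * ρinvᴴ = ρinv * ρ := by
      conv_lhs => rw [← hρH]
      rw [← Matrix.conjTranspose_mul]
      exact hmp4.eq
    have e4 : ρinvᴴ * ρ = ρ * ρinv := by
      conv_lhs => rw [← hρH]
      rw [← Matrix.conjTranspose_mul]
      exact hmp3.eq
    have g1 : ρ * ρinvᴴ * ρ = ρ := by
      have := congrArg conjTranspose hmp1
      simpa only [Matrix.conjTranspose_mul, hρH, Matrix.mul_assoc] using this
    have g2 : ρinvᴴ * ρ * ρinvᴴ = ρinvᴴ := by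
      have := congrArg conjTranspose hmp2
      simpa only [Matrix.conjTranspose_mul, hρH, Matrix.mul_assoc] using this
    have g3 : (ρ * ρinvᴴ)ᴴ = ρ * ρinvᴴ := by rw [e3]; exact hmp4.eq
    have g4 : (ρinvᴴ * ρ)ᴴ = ρinvᴴ * ρ := by rw [e4]; exact hmp3.eq
    exact (mp_unique ρ ρinv ρinvᴴ hmp1 hmp2 hmp3.eq hmp4.eq g1 g2 g3 g4).symm
  -- ρ * ρinv fixes ψᵢ
  obtain ⟨v₁, hv₁⟩ := hrange₁
  obtain ⟨v₂, hv₂⟩ := hrange₂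
  have hfix : ∀ (v ψ : Fin n → ℂ), ρ.mulVec v = ψ → ρ.mulVec (ρinv.mulVec ψ) = ψ := by
    intro v ψ hv
    rw [← hv, Matrix.mulVec_mulVec, Matrix.mulVec_mulVec, hmp1]
  have hfix₁ := hfix v₁ ψ₁ hv₁
  have hfix₂ := hfix v₂ ψ₂ hv₂
  -- the other orthogonality
  have horth' : star ψ₂ ⬝ᵥ ρinv.mulVec ψ₁ = 0 := by
    rw [star_dotProduct, Matrix.star_mulVec, hBH, ← Matrix.dotProduct_mulVec, horth,
      star_zero]
  -- the scalar identities
  have hscal : ∀ (Λ : ℝ) (ψ : Fin n → ℂ), (Λ : ℂ) = (star ψ ⬝ᵥ ρinv.mulVec ψ)⁻¹ →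
      (Λ : ℂ) * ((Λ : ℂ) * (star ψ ⬝ᵥ ρinv.mulVec ψ)) = (Λ : ℂ) := by
    intro Λ ψ hΛ
    set c := star ψ ⬝ᵥ ρinv.mulVec ψ
    rcases eq_or_ne c 0 with hc | hc
    · simp [hΛ, hc]
    · rw [hΛ]; field_simp
  -- the matrix S
  set S : Matrix (Fin n) (Fin n) ℂ :=
    (Λ₁ : ℂ) • vecMulVec ψ₁ (star ψ₁) + (Λ₂ : ℂ) • vecMulVec ψ₂ (star ψ₂) with hS
  set T : Matrix (Fin n) (Fin n) ℂ :=
    (Λ₁ : ℂ) • vecMulVec (ρinv.mulVec ψ₁) (star ψ₁)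
      + (Λ₂ : ℂ) • vecMulVec (ρinv.mulVec ψ₂) (star ψ₂) with hT
  have hρT : ρ * T = S := by
    rw [hT, hS, Matrix.mul_add, Matrix.mul_smul, Matrix.mul_smul,
      mul_vecMulVec', mul_vecMulVec', hfix₁, hfix₂]
  have hTH : Tᴴ * ρ = S := by
    have : Tᴴ * ρ = (ρ * T)ᴴ := by rw [Matrix.conjTranspose_mul, hρH]
    rw [this, hρT, hS]
    simp only [Matrix.conjTranspose_add, Matrix.conjTranspose_smul, vecMulVec_conjT,
      star_star]
    rw [Complex.star_def, Complex.conj_ofReal, Complex.conj_ofReal]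
  have hST : S * T = S := by
    rw [hS, hT]
    simp only [Matrix.add_mul, Matrix.mul_add, Matrix.smul_mul, Matrix.mul_smul,
      vecMulVec_mul_vecMulVec', horth, horth', zero_smul, smul_zero, add_zero, zero_add,
      smul_smul]
    rw [hscal Λ₁ ψ₁ hΛ₁, hscal Λ₂ ψ₂ hΛ₂]
  -- the key factorization
  have key : ρ - Λ₁ • Matrix.vecMulVec ψ₁ (star ψ₁) - Λ₂ • Matrix.vecMulVec ψ₂ (star ψ₂)
      = (1 - T)ᴴ * ρ * (1 - T) := by
    have expand : (1 - T)ᴴ * ρ * (1 - T) = ρ - Tᴴ * ρ - ρ * T + Tᴴ * ρ * T := by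
      simp only [Matrix.conjTranspose_sub, Matrix.conjTranspose_one]
      noncomm_ring
    rw [expand, hTH, hρT, hST]
    have : ∀ i j, ((Λ₁ : ℝ) • Matrix.vecMulVec ψ₁ (star ψ₁)
        + (Λ₂ : ℝ) • Matrix.vecMulVec ψ₂ (star ψ₂)) i j = S i j := by
      intro i j
      simp [hS, Complex.real_smul]
    have hSeq : (Λ₁ : ℝ) • Matrix.vecMulVec ψ₁ (star ψ₁)
        + (Λ₂ : ℝ) • Matrix.vecMulVec ψ₂ (star ψ₂) = S := by
      ext i j; exact this i j
    rw [← hSeq]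
    abel
  rw [key]
  exact hρ.conjTranspose_mul_mul_same (1 - T)
end

section
/- For a pure state γ = |ψ⟩⟨ψ| on ℂ² ⊗ ℂ^N with normalized concurrence q ∈ (0,1], the eigenvector of the partial transpose γ^{T_B} corresponding to the unique negative eigenvalue −q/2 is, up to phase, the maximally entangled vector (e₁⊗f₂ − e₂⊗f₁)/√2 in the Schmidt basis of ψ. -/
lemma sum_step_aux {N : ℕ} (k : ℕ) (hk : k < N) (a b : ℂ) (A : Fin N → ℂ) :
    ∑ n : Fin N, (if (n : ℕ) = k then a else 0) * b * A n = a * b * A ⟨k, hk⟩ := by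
  rw [Finset.sum_eq_single (⟨k, hk⟩ : Fin N)]
  · simp
  · intro n _ hn
    rw [if_neg, zero_mul, zero_mul]
    intro h
    exact hn (Fin.ext h)
  · simp

theorem stmt_12 (N : ℕ) (hN : 2 ≤ N) (θ : ℝ) (q : ℝ) (hq : 0 < q) (hq1 : q ≤ 1)
    (hsc : Real.sin θ * Real.cos θ = q / 2)
    (ψ : Fin 2 × Fin N → ℂ)
    (hψ : ∀ i j, ψ (i, j) =
      if (i : ℕ) = 0 ∧ (j : ℕ) = 0 then (Real.cos θ : ℂ)
      else if (i : ℕ) = 1 ∧ (j : ℕ) = 1 then (Real.sin θ : ℂ) else 0)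
    (γ γT : Matrix (Fin 2 × Fin N) (Fin 2 × Fin N) ℂ)
    (hγ : γ = Matrix.vecMulVec ψ (star ψ))
    -- partial transposition on the second factor
    (hγT : ∀ i k m n, γT (i, m) (k, n) = γ (i, n) (k, m))
    -- the maximally entangled singlet vector in the Schmidt basis
    (w : Fin 2 × Fin N → ℂ)
    (hw : ∀ i j, w (i, j) =
      if (i : ℕ) = 0 ∧ (j : ℕ) = 1 then (1 / Real.sqrt 2 : ℂ)
      else if (i : ℕ) = 1 ∧ (j : ℕ) = 0 then (-(1 / Real.sqrt 2) : ℂ) else 0)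
    (v : Fin 2 × Fin N → ℂ) (hv : v ≠ 0)
    (heig : γT.mulVec v = (-(q / 2) : ℝ) • v) :
    ∃ c : ℂ, c ≠ 0 ∧ v = c • w := by
  have hN0 : 0 < N := by omega
  have hN1 : 1 < N := by omega
  set f0 : Fin N := ⟨0, hN0⟩ with hf0
  set f1 : Fin N := ⟨1, hN1⟩ with hf1
  have hf00 : (f0 : ℕ) = 0 := rfl
  have hf11 : (f1 : ℕ) = 1 := rfl
  have hf01 : (f0 : ℕ) ≠ 1 := by simp [hf0]
  have hf10 : (f1 : ℕ) ≠ 0 := by simp [hf1]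
  set c : ℂ := (Real.cos θ : ℂ) with hc
  set s : ℂ := (Real.sin θ : ℂ) with hs
  -- basic real facts
  have hsne : Real.sin θ ≠ 0 := by
    intro h; rw [h, zero_mul] at hsc; linarith
  have hcne : Real.cos θ ≠ 0 := by
    intro h; rw [h, mul_zero] at hsc; linarith
  have hsum_sq : (Real.sin θ + Real.cos θ) ^ 2 = 1 + q := by
    have := Real.sin_sq_add_cos_sq θ
    nlinarith [hsc]
  have hsumne : Real.sin θ + Real.cos θ ≠ 0 := by
    intro h
    rw [h] at hsum_sq
    simp at hsum_sq
    linarith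
  have hsC : s ≠ 0 := by
    rw [hs]; exact_mod_cast hsne
  have hcC : c ≠ 0 := by
    rw [hc]; exact_mod_cast hcne
  have hsumC : s + c ≠ 0 := by
    rw [hs, hc, ← Complex.ofReal_add]; exact_mod_cast hsumne
  have hscC : s * c = (q : ℂ) / 2 := by
    rw [hs, hc, ← Complex.ofReal_mul, hsc]
    push_cast
    ring
  have hq2C : ((q : ℂ) / 2) ≠ 0 := by
    have : (q : ℂ) ≠ 0 := by exact_mod_cast ne_of_gt hq
    simpa using this
  -- entries of ψ
  have hψ0 : ∀ n : Fin N, ψ (0, n) = if (n : ℕ) = 0 then c else 0 := by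
    intro n; rw [hψ]; simp [hc]
  have hψ1 : ∀ n : Fin N, ψ (1, n) = if (n : ℕ) = 1 then s else 0 := by
    intro n; rw [hψ]; simp [hs]
  have hstarc : (star c : ℂ) = c := by
    rw [hc]; exact Complex.conj_ofReal _
  have hstars : (star s : ℂ) = s := by
    rw [hs]; exact Complex.conj_ofReal _
  -- pointwise eigenvalue equation
  have hpt : ∀ (i : Fin 2) (m : Fin N),
      γT.mulVec v (i, m) = -((q : ℂ) / 2) * v (i, m) := by
    intro i m
    have h := congrFun heig (i, m)
    rw [h, Pi.smul_apply, Complex.real_smul]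
    push_cast
    ring
  -- mulVec formula
  have hmv : ∀ (i : Fin 2) (m : Fin N),
      γT.mulVec v (i, m) =
        ∑ k : Fin 2, ∑ n : Fin N, ψ (i, n) * star (ψ (k, m)) * v (k, n) := by
    intro i m
    rw [Matrix.mulVec, dotProduct, Fintype.sum_prod_type]
    apply Finset.sum_congr rfl
    intro k _
    apply Finset.sum_congr rfl
    intro n _
    rw [hγT, hγ, Matrix.vecMulVec_apply]
    rfl
  have h0 : ∀ m : Fin N, γT.mulVec v (0, m) =
      c * (if (m : ℕ) = 0 then c else 0) * v (0, f0)
      + c * (if (m : ℕ) = 1 then s else 0) * v (1, f0) := by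
    intro m
    rw [hmv, Fin.sum_univ_two]
    simp only [hψ0, hψ1, apply_ite (star : ℂ → ℂ), star_zero, hstarc, hstars]
    rw [sum_step_aux 0 hN0, sum_step_aux 0 hN0]
  have h1 : ∀ m : Fin N, γT.mulVec v (1, m) =
      s * (if (m : ℕ) = 0 then c else 0) * v (0, f1)
      + s * (if (m : ℕ) = 1 then s else 0) * v (1, f1) := by
    intro m
    rw [hmv, Fin.sum_univ_two]
    simp only [hψ0, hψ1, apply_ite (star : ℂ → ℂ), star_zero, hstarc, hstars]
    rw [sum_step_aux 1 hN1, sum_step_aux 1 hN1]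
  -- the component equations
  have E00 : v (0, f0) = 0 := by
    have e := (hpt 0 f0).symm.trans (h0 f0)
    rw [if_pos hf00, if_neg hf01] at e
    have key : c * (c + s) * v (0, f0) = 0 := by
      linear_combination -e + v (0, f0) * hscC
    rcases mul_eq_zero.mp key with h | h
    · rcases mul_eq_zero.mp h with h' | h'
      · exact absurd h' hcC
      · exact absurd (by linear_combination h') hsumC
    · exact h
  have E11 : v (1, f1) = 0 := by
    have e := (hpt 1 f1).symm.trans (h1 f1)
    rw [if_neg hf10, if_pos hf11] at e
    have key : s * (s + c) * v (1, f1) = 0 := by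
      linear_combination -e + v (1, f1) * hscC
    rcases mul_eq_zero.mp key with h | h
    · rcases mul_eq_zero.mp h with h' | h'
      · exact absurd h' hsC
      · exact absurd h' hsumC
    · exact h
  have E01 : v (1, f0) = - v (0, f1) := by
    have e := (hpt 0 f1).symm.trans (h0 f1)
    rw [if_neg hf10, if_pos hf11] at e
    have key : ((q : ℂ) / 2) * (v (1, f0) + v (0, f1)) = 0 := by
      linear_combination -e - v (1, f0) * hscC
    have h2 := (mul_eq_zero.mp key).resolve_left hq2C
    linear_combination h2
  have Eother : ∀ (i : Fin 2) (m : Fin N), (m : ℕ) ≠ 0 → (m : ℕ) ≠ 1 → v (i, m) = 0 := by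
    intro i m hm0 hm1
    have hz : γT.mulVec v (i, m) = 0 := by
      by_cases hi : i = 0
      · subst hi; rw [h0 m, if_neg hm0, if_neg hm1]; ring
      · have hi1 : i = 1 := by omega
        subst hi1; rw [h1 m, if_neg hm0, if_neg hm1]; ring
    have e := (hpt i m).symm.trans hz
    have : -((q : ℂ) / 2) ≠ 0 := by simpa using hq2C
    exact (mul_eq_zero.mp e).resolve_left this
  -- v (0, f1) ≠ 0
  set a : ℂ := v (0, f1) with ha
  have hane : a ≠ 0 := by
    intro h
    apply hv
    funext x
    obtain ⟨i, j⟩ := x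
    show v (i, j) = 0
    by_cases hj0 : (j : ℕ) = 0
    · have hj : j = f0 := Fin.ext hj0
      subst hj
      by_cases hi : i = 0
      · subst hi; exact E00
      · have hi1 : i = 1 := by omega
        subst hi1; rw [E01, h, neg_zero]
    · by_cases hj1 : (j : ℕ) = 1
      · have hj : j = f1 := Fin.ext hj1
        subst hj
        by_cases hi : i = 0
        · subst hi; exact h
        · have hi1 : i = 1 := by omega
          subst hi1; exact E11
      · exact Eother i j hj0 hj1
  have hrt2 : (Real.sqrt 2 : ℂ) ≠ 0 := by
    simpa using Real.sqrt_ne_zero'.mpr (by norm_num : (0:ℝ) < 2)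
  refine ⟨a * (Real.sqrt 2 : ℂ), mul_ne_zero hane hrt2, ?_⟩
  funext x
  obtain ⟨i, j⟩ := x
  rw [Pi.smul_apply, hw, smul_eq_mul]
  by_cases hj0 : (j : ℕ) = 0
  · have hj : j = f0 := Fin.ext hj0
    subst hj
    by_cases hi : i = 0
    · subst hi
      rw [if_neg (by exact fun hco => hf01 hco.2), if_neg (by simp), mul_zero]
      exact E00
    · have hi1 : i = 1 := by omega
      subst hi1
      rw [if_neg (by simp), if_pos ⟨rfl, hf00⟩]
      rw [E01]
      field_simp
  · by_cases hj1 : (j : ℕ) = 1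
    · have hj : j = f1 := Fin.ext hj1
      subst hj
      by_cases hi : i = 0
      · subst hi
        rw [if_pos ⟨rfl, hf11⟩]
        show a = a * ↑(Real.sqrt 2) * (1 / ↑(Real.sqrt 2))
        field_simp
      · have hi1 : i = 1 := by omega
        subst hi1
        rw [if_neg (by simp), if_neg (fun hco => hf10 hco.2), mul_zero]
        exact E11
    · rw [if_neg (fun hco => hj1 hco.2), if_neg (fun hco => hj0 hco.2), mul_zero]
      exact Eother i j hj0 hj1
end

section
/- Let ρ be a rank-2 positive semidefinite operator on ℂ^M ⊗ ℂ^N (M, N ≥ 2) whose range contains an entangled vector φ₁ with at least two nonzero Schmidt coefficients. Then the range of ρ contains at most two product vectors up to scalar multiples; more precisely, the set of χ ∈ ℂ such that χφ₁ + φ₂ is a product vector (φ₂ any vector with range(ρ) = span{φ₁,φ₂}) has at most two elements. -/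
/-- A quadratic with nonzero leading coefficient over ℂ has at most two roots. -/
lemma quad_roots (a b c x₁ x₂ x₃ : ℂ) (ha : a ≠ 0)
    (h₁ : a * x₁ ^ 2 + b * x₁ + c = 0)
    (h₂ : a * x₂ ^ 2 + b * x₂ + c = 0)
    (h₃ : a * x₃ ^ 2 + b * x₃ + c = 0)
    (h12 : x₁ ≠ x₂) : x₃ = x₁ ∨ x₃ = x₂ := by
  by_contra h
  push_neg at h
  obtain ⟨h31, h32⟩ := h
  have key : ∀ x y : ℂ, x ≠ y → a * x ^ 2 + b * x + c = 0 →
      a * y ^ 2 + b * y + c = 0 → a * (x + y) + b = 0 := by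
    intro x y hxy hx hy
    have h : (x - y) * (a * (x + y) + b) = 0 := by linear_combination hx - hy
    rcases mul_eq_zero.mp h with h' | h'
    · exact absurd (sub_eq_zero.mp h') hxy
    · exact h'
  have k1 := key x₃ x₁ h31 h₃ h₁
  have k2 := key x₃ x₂ h32 h₃ h₂
  have : a * (x₁ - x₂) = 0 := by linear_combination k1 - k2
  rcases mul_eq_zero.mp this with h' | h'
  · exact ha h'
  · exact h12 (sub_eq_zero.mp h')

theorem stmt_13 (M N : ℕ) (hM : 2 ≤ M) (hN : 2 ≤ N)
    (φ₁ φ₂ : Matrix (Fin M) (Fin N) ℂ)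
    -- φ₁ is entangled: not a product vector (equivalently, it has
    -- at least two nonzero Schmidt coefficients)
    (hent : ¬ ∃ (b : Fin M → ℂ) (c : Fin N → ℂ), ∀ i j, φ₁ i j = b i * c j)
    -- the range of the rank-2 state is spanned by the independent φ₁, φ₂
    (hind : LinearIndependent ℂ ![φ₁, φ₂]) :
    ∃ χ₁ χ₂ : ℂ,
      {χ : ℂ | ∃ (b : Fin M → ℂ) (c : Fin N → ℂ),
        ∀ i j, χ * φ₁ i j + φ₂ i j = b i * c j} ⊆ {χ₁, χ₂} := by
  classical
  set S := {χ : ℂ | ∃ (b : Fin M → ℂ) (c : Fin N → ℂ),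
      ∀ i j, χ * φ₁ i j + φ₂ i j = b i * c j} with hS
  -- φ₁ has a nonzero 2×2 minor
  have hminor : ∃ i i' j j',
      φ₁ i j * φ₁ i' j' - φ₁ i j' * φ₁ i' j ≠ 0 := by
    by_contra h
    push_neg at h
    apply hent
    by_cases h0 : ∀ i j, φ₁ i j = 0
    · exact ⟨fun _ => 0, fun _ => 0, fun i j => by simp [h0 i j]⟩
    · push_neg at h0
      obtain ⟨i0, j0, h00⟩ := h0
      refine ⟨fun i => φ₁ i j0, fun j => φ₁ i0 j / φ₁ i0 j0, fun i j => ?_⟩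
      field_simp
      linear_combination h i i0 j j0
  obtain ⟨i, i', j, j', hA⟩ := hminor
  set A : ℂ := φ₁ i j * φ₁ i' j' - φ₁ i j' * φ₁ i' j with hAdef
  set B : ℂ := φ₁ i j * φ₂ i' j' + φ₂ i j * φ₁ i' j'
      - φ₁ i j' * φ₂ i' j - φ₂ i j' * φ₁ i' j with hBdef
  set C : ℂ := φ₂ i j * φ₂ i' j' - φ₂ i j' * φ₂ i' j with hCdef
  -- every χ in S is a root of A χ² + B χ + C
  have hroot : ∀ χ ∈ S, A * χ ^ 2 + B * χ + C = 0 := by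
    intro χ hχ
    obtain ⟨b, c, hbc⟩ := hχ
    have e1 := hbc i j
    have e2 := hbc i' j'
    have e3 := hbc i j'
    have e4 := hbc i' j
    simp only [hAdef, hBdef, hCdef]
    linear_combination (χ * φ₁ i' j' + φ₂ i' j') * e1 + b i * c j * e2
      - (χ * φ₁ i' j + φ₂ i' j) * e3 - b i * c j' * e4
  by_cases h1 : ∃ χ, χ ∈ S
  · obtain ⟨χ₁, hχ₁⟩ := h1
    by_cases h2 : ∃ χ ∈ S, χ ≠ χ₁
    · obtain ⟨χ₂, hχ₂, hne⟩ := h2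
      refine ⟨χ₁, χ₂, fun χ hχ => ?_⟩
      rcases quad_roots A B C χ₁ χ₂ χ hA (hroot _ hχ₁) (hroot _ hχ₂)
        (hroot _ hχ) (Ne.symm hne) with h | h
      · exact Or.inl h
      · exact Or.inr h
    · push_neg at h2
      exact ⟨χ₁, χ₁, fun χ hχ => Or.inl (h2 χ hχ)⟩
  · push_neg at h1
    exact ⟨0, 0, fun χ hχ => absurd hχ (h1 χ)⟩
end

section
/- Let φ₁ ∈ ℂ^M ⊗ ℂ^N have coefficient matrix diag(η₁, η₂, …) with η₁ ≥ η₂ > 0 (Schmidt form), and let φ₂ have coefficient matrix (z_{ij}). If χ ∈ ℂ is such that χφ₁ + φ₂ is a product vector, then (χη₁ + z₁₁)(χη₂ + z₂₂) = z₁₂ z₂₁; in particular this quadratic equation in χ has at most two roots. -/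
theorem stmt_14 (M N : ℕ) (hM : 2 ≤ M) (hN : 2 ≤ N)
    (η : Fin M → ℝ) (hη12 : η ⟨1, by omega⟩ ≤ η ⟨0, by omega⟩)
    (hη2 : 0 < η ⟨1, by omega⟩)
    (φ₁ : Matrix (Fin M) (Fin N) ℂ)
    (hφ₁ : ∀ i j, φ₁ i j = if (i : ℕ) = (j : ℕ) then (η i : ℂ) else 0)
    (z : Matrix (Fin M) (Fin N) ℂ) (χ : ℂ)
    (hprod : ∃ (b : Fin M → ℂ) (c : Fin N → ℂ),
      ∀ i j, χ * φ₁ i j + z i j = b i * c j) :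
    (χ * (η ⟨0, by omega⟩ : ℂ) + z ⟨0, by omega⟩ ⟨0, by omega⟩) *
        (χ * (η ⟨1, by omega⟩ : ℂ) + z ⟨1, by omega⟩ ⟨1, by omega⟩) =
      z ⟨0, by omega⟩ ⟨1, by omega⟩ * z ⟨1, by omega⟩ ⟨0, by omega⟩ := by
  obtain ⟨b, c, h⟩ := hprod
  have h00 := h ⟨0, by omega⟩ ⟨0, by omega⟩
  have h11 := h ⟨1, by omega⟩ ⟨1, by omega⟩
  have h01 := h ⟨0, by omega⟩ ⟨1, by omega⟩
  have h10 := h ⟨1, by omega⟩ ⟨0, by omega⟩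
  simp only [hφ₁] at h00 h11 h01 h10
  norm_num at h00 h11 h01 h10
  rw [h00, h11, h01, h10]
  ring
end

section
/- Every 2-dimensional subspace of ℂ² ⊗ ℂ² contains at least one nonzero product vector. -/
/-!
Over an algebraically closed field, a pencil `A + t • B` with `B` invertible always meets the
singular matrices: `t = μ` for any root `μ` of the characteristic polynomial of `-(B⁻¹ * A)`.
So any two linearly independent matrices in `V` span a nonzero singular matrix, and a singular
`2 × 2` matrix has rank at most one, i.e. it is an outer product `b cᵀ`.
-/

open Matrix Module Polynomial

variable {K : Type*} [Field K]

theorem Matrix.exists_eq_vecMulVec_of_det_eq_zero (M : Matrix (Fin 2) (Fin 2) K)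
    (h : M.det = 0) : ∃ b c : Fin 2 → K, M = vecMulVec b c := by
  rw [det_fin_two] at h
  by_cases h00 : M 0 0 = 0
  · rw [h00, zero_mul, zero_sub, neg_eq_zero, mul_eq_zero] at h
    rcases h with h01 | h10
    · exact ⟨![0, 1], M 1, by
        ext i j; fin_cases i <;> fin_cases j <;> simp [vecMulVec_apply, h00, h01]⟩
    · exact ⟨![M 0 1, M 1 1], ![0, 1], by
        ext i j; fin_cases i <;> fin_cases j <;> simp [vecMulVec_apply, h00, h10]⟩
  · refine ⟨![M 0 0, M 1 0], ![1, M 0 1 / M 0 0], ?_⟩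
    ext i j
    fin_cases i <;> fin_cases j <;> simp [vecMulVec_apply] <;> field_simp
    linear_combination h

section IsAlgClosed

variable [IsAlgClosed K] {n : Type*} [Fintype n] [DecidableEq n] [Nonempty n]

theorem Matrix.exists_det_scalar_sub_eq_zero (M : Matrix n n K) :
    ∃ μ : K, (scalar n μ - M).det = 0 := by
  obtain ⟨μ, hμ⟩ := IsAlgClosed.exists_root M.charpoly <| by
    simp [charpoly_degree_eq_dim, Fintype.card_ne_zero]
  exact ⟨μ, by rwa [IsRoot, eval_charpoly] at hμ⟩

theorem Matrix.exists_det_add_smul_eq_zero (A : Matrix n n K) {B : Matrix n n K}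
    (hB : IsUnit B.det) : ∃ t : K, (A + t • B).det = 0 := by
  obtain ⟨t, ht⟩ := (-(B⁻¹ * A)).exists_det_scalar_sub_eq_zero
  refine ⟨t, ?_⟩
  have : A + t • B = B * (scalar n t - -(B⁻¹ * A)) := by
    rw [sub_neg_eq_add, mul_add, mul_nonsing_inv_cancel_left _ _ hB, scalar_apply,
      ← smul_one_eq_diagonal, mul_smul_one, add_comm]
  rw [this, det_mul, ht, mul_zero]

theorem Submodule.exists_ne_zero_det_eq_zero (V : Submodule K (Matrix n n K))
    (hV : 1 < finrank K V) : ∃ A ∈ V, A ≠ 0 ∧ A.det = 0 := by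
  have : Nontrivial V := nontrivial_of_finrank_pos (zero_lt_one.trans hV)
  obtain ⟨B, hB⟩ := exists_ne (0 : V)
  obtain ⟨A, hAB⟩ := exists_linearIndependent_pair_of_one_lt_finrank hV hB
  by_cases hdet : (B : Matrix n n K).det = 0
  · exact ⟨B, B.2, fun h => hB (Subtype.ext h), hdet⟩
  obtain ⟨t, ht⟩ := exists_det_add_smul_eq_zero (A : Matrix n n K) (Ne.isUnit hdet)
  refine ⟨A + t • B, V.add_mem A.2 (V.smul_mem t B.2), fun h0 => ?_, ht⟩
  have := LinearIndependent.pair_iff.mp hAB t 1 (Subtype.ext (by simpa [add_comm] using h0))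
  exact one_ne_zero this.2

end IsAlgClosed

theorem stmt_15 (V : Submodule ℂ (Matrix (Fin 2) (Fin 2) ℂ))
    (hV : Module.finrank ℂ V = 2) :
    ∃ a ∈ V, a ≠ 0 ∧ ∃ (b c : Fin 2 → ℂ), ∀ i j, a i j = b i * c j := by
  obtain ⟨a, haV, ha0, hdet⟩ := V.exists_ne_zero_det_eq_zero (by omega)
  obtain ⟨b, c, rfl⟩ := a.exists_eq_vecMulVec_of_det_eq_zero hdet
  exact ⟨_, haV, ha0, b, c, fun _ _ => rfl⟩
end
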